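/- arXiv:2511.15606 — 2 statements merged into one kernel-verified Lean document; each statement's English description precedes it below -/
import Mathlib

section
/- Let X ⊆ ℝ^p, Y ⊆ ℝ^q be nonempty compact convex sets, and f : ℝ^p × ℝ^q → ℝ continuous, with f(·, y) convex on X for each y ∈ Y and f(x, ·) concave on Y for each x ∈ X. Then there exists a Nash equilibrium (x*, y*) ∈ X × Y, i.e., f(x*, y) ≤ f(x*, y*) ≤ f(x, y*) for all (x, y) ∈ X × Y, and the minimax equality min_{x∈X} max_{y∈Y} f(x,y) = max_{y∈Y} min_{x∈X} f(x,y) holds. -/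
open Finset in
lemma sep_lemma {p q : ℕ} {ι : Type*} [Fintype ι]
    {X : Set (EuclideanSpace ℝ (Fin p))} {Y : Set (EuclideanSpace ℝ (Fin q))}
    (hXne : X.Nonempty) (hXc : Convex ℝ X) (hYc : Convex ℝ Y)
    {f : EuclideanSpace ℝ (Fin p) × EuclideanSpace ℝ (Fin q) → ℝ}
    (hconv : ∀ y ∈ Y, ConvexOn ℝ X (fun x => f (x, y)))
    (hconc : ∀ x ∈ X, ConcaveOn ℝ Y (fun y => f (x, y)))
    (y : ι → EuclideanSpace ℝ (Fin q)) (hy : ∀ i, y i ∈ Y) (c : ℝ)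
    (hc : ∀ x ∈ X, ∃ i, c ≤ f (x, y i)) :
    ∃ y0 ∈ Y, ∀ x ∈ X, c ≤ f (x, y0) := by
  classical
  set K : Set (ι → ℝ) := {z | ∃ x ∈ X, ∀ i, f (x, y i) ≤ z i} with hK
  set O : Set (ι → ℝ) := {z | ∀ i, z i < c} with hO
  have hOopen : IsOpen O := by
    have : O = Set.pi Set.univ (fun _ : ι => Set.Iio c) := by
      ext z; simp [hO, Set.mem_pi]
    rw [this]
    exact isOpen_set_pi Set.finite_univ (fun i _ => isOpen_Iio)
  have hOconv : Convex ℝ O := by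
    have : O = Set.pi Set.univ (fun _ : ι => Set.Iio c) := by
      ext z; simp [hO, Set.mem_pi]
    rw [this]
    exact convex_pi (fun i _ => convex_Iio c)
  have hKconv : Convex ℝ K := by
    rintro z1 ⟨x1, hx1, h1⟩ z2 ⟨x2, hx2, h2⟩ a b ha hb hab
    refine ⟨a • x1 + b • x2, hXc hx1 hx2 ha hb hab, fun i => ?_⟩
    calc f (a • x1 + b • x2, y i) ≤ a * f (x1, y i) + b * f (x2, y i) :=
          (hconv (y i) (hy i)).2 hx1 hx2 ha hb hab
      _ ≤ a * z1 i + b * z2 i := by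
          have := h1 i; have := h2 i
          have : a * f (x1, y i) ≤ a * z1 i := mul_le_mul_of_nonneg_left (h1 i) ha
          have : b * f (x2, y i) ≤ b * z2 i := mul_le_mul_of_nonneg_left (h2 i) hb
          linarith [mul_le_mul_of_nonneg_left (h1 i) ha, mul_le_mul_of_nonneg_left (h2 i) hb]
      _ = (a • z1 + b • z2) i := by simp [Pi.add_apply, Pi.smul_apply, smul_eq_mul]
  have hdisj : Disjoint O K := by
    rw [Set.disjoint_left]
    rintro z hzO ⟨x, hxX, hz⟩
    obtain ⟨i, hi⟩ := hc x hxX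
    exact absurd (hi.trans (hz i)) (not_le.2 (hzO i))
  obtain ⟨L, u, hLO, hLK⟩ := geometric_hahn_banach_open hOconv hOopen hKconv hdisj
  obtain ⟨x0, hx0⟩ := hXne
  set lam : ι → ℝ := fun i => L (fun j => if i = j then 1 else 0) with hlam
  have hLz : ∀ z : ι → ℝ, L z = ∑ i, z i * lam i := by
    intro z
    have := LinearMap.pi_apply_eq_sum_univ (L : (ι → ℝ) →ₗ[ℝ] ℝ) z
    simpa [smul_eq_mul, hlam] using this
  have hb0 : (fun i => f (x0, y i)) ∈ K := ⟨x0, hx0, fun i => le_rfl⟩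
  -- each lam i is nonneg
  have hlam_nonneg : ∀ i, 0 ≤ lam i := by
    intro i
    by_contra hneg
    push_neg at hneg
    set t : ℝ := max 0 ((u - L (fun j => f (x0, y j))) / lam i + 1) with ht
    have ht0 : 0 ≤ t := le_max_left _ _
    have hmem : (fun j => f (x0, y j) + t * (if i = j then 1 else 0)) ∈ K := by
      refine ⟨x0, hx0, fun j => ?_⟩
      have h0 : 0 ≤ t * (if i = j then 1 else 0) := by positivity
      show f (x0, y j) ≤ f (x0, y j) + t * (if i = j then 1 else 0)
      linarith
    have hval : L (fun j => f (x0, y j) + t * (if i = j then 1 else 0))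
        = L (fun j => f (x0, y j)) + t * lam i := by
      have : (fun j => f (x0, y j) + t * (if i = j then 1 else 0))
          = (fun j => f (x0, y j)) + t • (fun j => if i = j then (1:ℝ) else 0) := by
        funext j; simp [smul_eq_mul]
      rw [this, map_add, map_smul, smul_eq_mul, hlam]
    have hgt : t > (u - L (fun j => f (x0, y j))) / lam i := by
      have := le_max_right 0 ((u - L (fun j => f (x0, y j))) / lam i + 1)
      linarith
    have : t * lam i < u - L (fun j => f (x0, y j)) := by
      calc t * lam i < ((u - L (fun j => f (x0, y j))) / lam i) * lam i :=
            (mul_lt_mul_right_of_neg hneg).2 hgt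
        _ = u - L (fun j => f (x0, y j)) := div_mul_cancel₀ _ (ne_of_lt hneg)
    have h1 := hLK _ hmem
    rw [hval] at h1
    linarith
  set S : ℝ := ∑ i, lam i with hS
  have hS0 : 0 ≤ S := Finset.sum_nonneg (fun i _ => hlam_nonneg i)
  have hSpos : 0 < S := by
    rcases lt_or_eq_of_le hS0 with h | h
    · exact h
    · exfalso
      have hall : ∀ i ∈ Finset.univ, lam i = 0 := by
        intro i _
        exact (Finset.sum_eq_zero_iff_of_nonneg (fun i _ => hlam_nonneg i)).1 h.symm i (Finset.mem_univ i)
      have hL0 : ∀ z : ι → ℝ, L z = 0 := by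
        intro z; rw [hLz]; exact Finset.sum_eq_zero (fun i _ => by rw [hall i (Finset.mem_univ i), mul_zero])
      have h1 : (0:ℝ) < u := by
        have := hLO (fun _ => c - 1) (fun i => by simp)
        rwa [hL0] at this
      have h2 : u ≤ 0 := by
        have := hLK _ hb0
        rwa [hL0] at this
      linarith
  -- c * S ≤ u
  have hcSu : c * S ≤ u := by
    by_contra hlt
    push_neg at hlt
    set ε : ℝ := (c * S - u) / S with hε
    have hεpos : 0 < ε := div_pos (by linarith) hSpos
    have hmemO : (fun _ : ι => c - ε) ∈ O := fun i => by simp [hεpos]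
    have := hLO _ hmemO
    rw [hLz] at this
    have hsum : ∑ i, (c - ε) * lam i = (c - ε) * S := by
      rw [hS, Finset.mul_sum]
    rw [hsum] at this
    have : c * S - ε * S < u := by ring_nf at this ⊢; linarith
    rw [hε, div_mul_cancel₀ _ (ne_of_gt hSpos)] at this
    linarith
  set w : ι → ℝ := fun i => lam i / S with hw
  have hw_nonneg : ∀ i ∈ Finset.univ, 0 ≤ w i := fun i _ => div_nonneg (hlam_nonneg i) hS0
  have hw_sum : ∑ i, w i = 1 := by
    rw [hw]; simp only []
    rw [← Finset.sum_div, ← hS, div_self (ne_of_gt hSpos)]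
  refine ⟨∑ i, w i • y i, hYc.sum_mem hw_nonneg hw_sum (fun i _ => hy i), fun x hx => ?_⟩
  have hKx : (fun i => f (x, y i)) ∈ K := ⟨x, hx, fun i => le_rfl⟩
  have h1 : u ≤ ∑ i, f (x, y i) * lam i := by
    have := hLK _ hKx; rwa [hLz] at this
  have h2 : ∑ i, w i • f (x, y i) ≤ f (x, ∑ i, w i • y i) :=
    (hconc x hx).le_map_sum hw_nonneg hw_sum (fun i _ => hy i)
  have h3 : c ≤ ∑ i, w i • f (x, y i) := by
    have : ∑ i, w i • f (x, y i) = (∑ i, f (x, y i) * lam i) / S := by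
      rw [Finset.sum_div]
      exact Finset.sum_congr rfl (fun i _ => by rw [hw]; simp [smul_eq_mul]; ring)
    rw [this]
    rw [le_div_iff₀ hSpos]
    calc c * S ≤ u := hcSu
      _ ≤ _ := h1
  linarith

theorem minimax_theorem_convex_concave {p q : ℕ}
    (X : Set (EuclideanSpace ℝ (Fin p))) (Y : Set (EuclideanSpace ℝ (Fin q)))
    (hXne : X.Nonempty) (hXc : Convex ℝ X) (hX : IsCompact X)
    (hYne : Y.Nonempty) (hYc : Convex ℝ Y) (hY : IsCompact Y)
    (f : EuclideanSpace ℝ (Fin p) × EuclideanSpace ℝ (Fin q) → ℝ)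
    (hf : Continuous f)
    (hconv : ∀ y ∈ Y, ConvexOn ℝ X (fun x => f (x, y)))
    (hconc : ∀ x ∈ X, ConcaveOn ℝ Y (fun y => f (x, y))) :
    (∃ xs ∈ X, ∃ ys ∈ Y,
      ∀ x ∈ X, ∀ y ∈ Y, f (xs, y) ≤ f (xs, ys) ∧ f (xs, ys) ≤ f (x, ys)) ∧
    sInf ((fun x => sSup ((fun y => f (x, y)) '' Y)) '' X) =
      sSup ((fun y => sInf ((fun x => f (x, y)) '' X)) '' Y) := by
  classical
  set g : EuclideanSpace ℝ (Fin p) → ℝ := fun x => sSup ((fun y => f (x, y)) '' Y) with hg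
  set h : EuclideanSpace ℝ (Fin q) → ℝ := fun y => sInf ((fun x => f (x, y)) '' X) with hh
  have hfy : ∀ x, Continuous (fun y => f (x, y)) := fun x => hf.comp (Continuous.prodMk_right x)
  have hfx : ∀ y, Continuous (fun x => f (x, y)) := fun y => hf.comp (Continuous.prodMk_left y)
  have hle_g : ∀ x, ∀ y ∈ Y, f (x, y) ≤ g x := fun x y hy =>
    le_csSup (hY.image (hfy x)).bddAbove (Set.mem_image_of_mem _ hy)
  have hg_le : ∀ x (c : ℝ), (∀ y ∈ Y, f (x, y) ≤ c) → g x ≤ c := fun x c hc =>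
    csSup_le (hYne.image _) (by rintro r ⟨y, hy, rfl⟩; exact hc y hy)
  have hh_le : ∀ y, ∀ x ∈ X, h y ≤ f (x, y) := fun y x hx =>
    csInf_le (hX.image (hfx y)).bddBelow (Set.mem_image_of_mem _ hx)
  have hle_h : ∀ y (c : ℝ), (∀ x ∈ X, c ≤ f (x, y)) → c ≤ h y := fun y c hc =>
    le_csInf (hXne.image _) (by rintro r ⟨x, hx, rfl⟩; exact hc x hx)
  -- minimizer of g on X
  have hxs : ∃ xs ∈ X, ∀ x ∈ X, g xs ≤ g x := by
    set Z : X → Set (EuclideanSpace ℝ (Fin p)) := fun x => {x' | ∀ y ∈ Y, f (x', y) ≤ g x}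
      with hZ
    have hZc : ∀ x : X, IsClosed (Z x) := by
      intro x
      have : Z x = ⋂ y ∈ Y, {x' | f (x', y) ≤ g x} := by
        ext x'; simp [hZ, Set.mem_iInter]
      rw [this]
      exact isClosed_biInter fun y hy => isClosed_le (hfx y) continuous_const
    have hne : (X ∩ ⋂ x : X, Z x).Nonempty := by
      by_contra hcon
      rw [Set.not_nonempty_iff_eq_empty] at hcon
      obtain ⟨u, hu⟩ := hX.elim_finite_subfamily_closed Z hZc hcon
      rcases u.eq_empty_or_nonempty with rfl | hune
      · apply hXne.ne_empty; simpa using hu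
      · obtain ⟨i0, hi0, hmin⟩ := u.exists_min_image (fun x : X => g x) hune
        apply Set.eq_empty_iff_forall_notMem.1 hu (i0 : EuclideanSpace ℝ (Fin p))
        refine ⟨i0.2, Set.mem_iInter₂.2 fun i hi => fun y hy => ?_⟩
        exact (hle_g _ y hy).trans (hmin i hi)
    obtain ⟨xs, hxsX, hxsZ⟩ := hne
    refine ⟨xs, hxsX, fun x hx => ?_⟩
    exact hg_le xs (g x) (Set.mem_iInter.1 hxsZ ⟨x, hx⟩)
  -- maximizer of h on Y
  have hys : ∃ ys ∈ Y, ∀ y ∈ Y, h y ≤ h ys := by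
    set W : Y → Set (EuclideanSpace ℝ (Fin q)) := fun y => {y' | ∀ x ∈ X, h y ≤ f (x, y')}
      with hW
    have hWc : ∀ y : Y, IsClosed (W y) := by
      intro y
      have : W y = ⋂ x ∈ X, {y' | h y ≤ f (x, y')} := by
        ext y'; simp [hW, Set.mem_iInter]
      rw [this]
      exact isClosed_biInter fun x hx => isClosed_le continuous_const (hfy x)
    have hne : (Y ∩ ⋂ y : Y, W y).Nonempty := by
      by_contra hcon
      rw [Set.not_nonempty_iff_eq_empty] at hcon
      obtain ⟨u, hu⟩ := hY.elim_finite_subfamily_closed W hWc hcon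
      rcases u.eq_empty_or_nonempty with rfl | hune
      · apply hYne.ne_empty; simpa using hu
      · obtain ⟨i0, hi0, hmax⟩ := u.exists_max_image (fun y : Y => h y) hune
        apply Set.eq_empty_iff_forall_notMem.1 hu (i0 : EuclideanSpace ℝ (Fin q))
        refine ⟨i0.2, Set.mem_iInter₂.2 fun i hi => fun x hx => ?_⟩
        exact (hmax i hi).trans (hh_le _ x hx)
    obtain ⟨ys, hysY, hysW⟩ := hne
    refine ⟨ys, hysY, fun y hy => ?_⟩
    exact hle_h ys (h y) (Set.mem_iInter.1 hysW ⟨y, hy⟩)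
  obtain ⟨xs, hxsX, hxsmin⟩ := hxs
  obtain ⟨ys, hysY, hysmax⟩ := hys
  have hv1 : g xs = sInf (g '' X) :=
    (IsLeast.csInf_eq ⟨Set.mem_image_of_mem _ hxsX, by
      rintro r ⟨x, hx, rfl⟩; exact hxsmin x hx⟩).symm
  have hv2 : h ys = sSup (h '' Y) :=
    (IsGreatest.csSup_eq ⟨Set.mem_image_of_mem _ hysY, by
      rintro r ⟨y, hy, rfl⟩; exact hysmax y hy⟩).symm
  have hweak : h ys ≤ g xs := (hh_le ys xs hxsX).trans (hle_g xs ys hysY)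
  have hstrong : g xs ≤ h ys := by
    by_contra hcon
    push_neg at hcon
    set c : ℝ := (g xs + h ys) / 2 with hcdef
    have hc1 : h ys < c := by rw [hcdef]; linarith
    have hc2 : c < g xs := by rw [hcdef]; linarith
    set T : Y → Set (EuclideanSpace ℝ (Fin p)) := fun y => {x' | f (x', y) ≤ c} with hT
    have hTc : ∀ y : Y, IsClosed (T y) := fun y => isClosed_le (hfx y) continuous_const
    have hTempty : X ∩ ⋂ y : Y, T y = ∅ := by
      rw [Set.eq_empty_iff_forall_notMem]
      rintro x ⟨hxX, hxT⟩
      have : g x ≤ c := hg_le x c fun y hy => Set.mem_iInter.1 hxT ⟨y, hy⟩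
      have : g xs ≤ c := (hxsmin x hxX).trans this
      linarith
    obtain ⟨u, hu⟩ := hX.elim_finite_subfamily_closed T hTc hTempty
    have hc : ∀ x ∈ X, ∃ i : {y : Y // y ∈ u}, c ≤ f (x, ((i : Y) : EuclideanSpace ℝ (Fin q))) := by
      intro x hx
      have := Set.eq_empty_iff_forall_notMem.1 hu x
      by_contra hno
      push_neg at hno
      refine this ⟨hx, Set.mem_iInter₂.2 fun i hi => ?_⟩
      exact (hno ⟨i, hi⟩).le
    obtain ⟨y0, hy0Y, hy0⟩ := sep_lemma hXne hXc hYc hconv hconc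
      (fun i : {y : Y // y ∈ u} => ((i : Y) : EuclideanSpace ℝ (Fin q)))
      (fun i => (i : Y).2) c hc
    have : c ≤ h y0 := hle_h y0 c hy0
    have : c ≤ h ys := this.trans (hysmax y0 hy0Y)
    linarith
  have hvv : g xs = h ys := le_antisymm hstrong hweak
  constructor
  · refine ⟨xs, hxsX, ys, hysY, fun x hx y hy => ?_⟩
    have h1 : f (xs, y) ≤ g xs := hle_g xs y hy
    have h2 : h ys ≤ f (xs, ys) := hh_le ys xs hxsX
    have h3 : f (xs, ys) ≤ g xs := hle_g xs ys hysY
    have h4 : h ys ≤ f (x, ys) := hh_le ys x hx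
    constructor <;> linarith [hvv.le, hvv.ge]
  · rw [← hv1, ← hv2, hvv]
end

section
/- Fix M ∈ ℕ, β ∈ (0,1), and k ∈ {0, 1, …, M−1}. The polynomial equation (β/(M+1)) · Σ_{m=k}^{M} C(m,k) t^{m−k} − C(M,k) t^{M−k} = 0 has a unique solution t(k) in the open interval (0,1). -/
theorem unique_root_in_Ioo (M : ℕ) (β : ℝ) (hβ : β ∈ Set.Ioo (0 : ℝ) 1)
    (k : ℕ) (hk : k < M) :
    ∃! t : ℝ, t ∈ Set.Ioo (0 : ℝ) 1 ∧
      (β / (M + 1)) * (∑ m ∈ Finset.Icc k M, (m.choose k : ℝ) * t ^ (m - k))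
        - (M.choose k : ℝ) * t ^ (M - k) = 0 := by
  obtain ⟨hβ0, hβ1⟩ := hβ
  have hM1 : (0:ℝ) < (M:ℝ) + 1 := by positivity
  set S : ℝ → ℝ := fun t => ∑ m ∈ Finset.Icc k M, (m.choose k : ℝ) * t ^ (m - k) with hS
  set f : ℝ → ℝ := fun t => (β / (M + 1)) * S t - (M.choose k : ℝ) * t ^ (M - k) with hfdef
  have hcont : Continuous f := by
    apply Continuous.sub
    · exact continuous_const.mul (continuous_finset_sum _ (fun m _ => by fun_prop))
    · fun_prop
  have hf0 : f 0 = β / ((M:ℝ) + 1) := by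
    have hsum : S 0 = 1 := by
      show (∑ m ∈ Finset.Icc k M, (m.choose k : ℝ) * (0:ℝ) ^ (m - k)) = 1
      rw [Finset.sum_eq_single k]
      · simp
      · intro m hm hmk
        simp only [Finset.mem_Icc] at hm
        simp [zero_pow (by omega : m - k ≠ 0)]
      · intro h
        exact absurd (Finset.mem_Icc.mpr ⟨le_refl k, hk.le⟩) h
    simp [hfdef, hsum, zero_pow (by omega : M - k ≠ 0)]
  have hf1 : f 1 < 0 := by
    have hsum : S 1 = ((M+1).choose (k+1) : ℝ) := by
      show (∑ m ∈ Finset.Icc k M, (m.choose k : ℝ) * (1:ℝ) ^ (m - k)) = ((M+1).choose (k+1) : ℝ)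
      simp only [one_pow, mul_one]
      rw [← Nat.cast_sum, Nat.sum_Icc_choose]
    have hchoose_pos : 0 < (M.choose k : ℝ) := by
      exact_mod_cast Nat.choose_pos hk.le
    have hle : ((M+1).choose (k+1) : ℝ) ≤ ((M:ℝ)+1) * (M.choose k : ℝ) := by
      have h := Nat.add_one_mul_choose_eq M k
      have h2 : (M+1).choose (k+1) ≤ (M+1) * M.choose k := by
        have h3 : (M+1).choose (k+1) ≤ (M+1).choose (k+1) * (k+1) :=
          Nat.le_mul_of_pos_right _ (Nat.succ_pos k)
        have h4 : (M+1).choose (k+1) * (k+1) = (M+1) * M.choose k := by simpa [Nat.succ_eq_add_one] using h.symm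
        omega
      exact_mod_cast h2
    have : (β / ((M:ℝ) + 1)) * S 1 < (M.choose k : ℝ) := by
      rw [hsum, div_mul_eq_mul_div, div_lt_iff₀ hM1]
      calc β * ((M+1).choose (k+1) : ℝ) ≤ β * (((M:ℝ)+1) * (M.choose k : ℝ)) :=
            mul_le_mul_of_nonneg_left hle hβ0.le
        _ < 1 * (((M:ℝ)+1) * (M.choose k : ℝ)) := by
            apply mul_lt_mul_of_pos_right hβ1; positivity
        _ = (M.choose k : ℝ) * ((M:ℝ)+1) := by ring
    simpa [hfdef] using sub_neg.mpr this
  -- existence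
  have h01 : (0:ℝ) ≤ 1 := zero_le_one
  have hmem : (0:ℝ) ∈ Set.Ioo (f 1) (f 0) := by
    constructor
    · exact hf1
    · rw [hf0]; positivity
  obtain ⟨t, ht, hft⟩ := intermediate_value_Ioo' h01 hcont.continuousOn hmem
  -- key comparison for uniqueness
  have key : ∀ a b : ℝ, 0 < a → a < b → f a = 0 → f b = 0 → False := by
    intro a b ha hab hfa hfb
    have hb : 0 < b := ha.trans hab
    have hβM : 0 < β / ((M:ℝ)+1) := by positivity
    have ea : (β / ((M:ℝ)+1)) * S a = (M.choose k : ℝ) * a ^ (M - k) := by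
      have := sub_eq_zero.mp hfa; linarith [this]
    have eb : (β / ((M:ℝ)+1)) * S b = (M.choose k : ℝ) * b ^ (M - k) := by
      have := sub_eq_zero.mp hfb; linarith [this]
    have heq : S a * b ^ (M - k) = S b * a ^ (M - k) := by
      have h1 : ((β / ((M:ℝ)+1)) * S a) * b ^ (M-k) = ((β / ((M:ℝ)+1)) * S b) * a ^ (M-k) := by
        rw [ea, eb]; ring
      have := mul_left_cancel₀ (ne_of_gt hβM) (by linarith [h1] : (β / ((M:ℝ)+1)) * (S a * b ^ (M-k)) = (β / ((M:ℝ)+1)) * (S b * a ^ (M-k)))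
      exact this
    have hlt : S b * a ^ (M - k) < S a * b ^ (M - k) := by
      show (∑ m ∈ Finset.Icc k M, (m.choose k : ℝ) * b ^ (m - k)) * a ^ (M-k) < (∑ m ∈ Finset.Icc k M, (m.choose k : ℝ) * a ^ (m - k)) * b ^ (M-k)
      rw [Finset.sum_mul, Finset.sum_mul]
      apply Finset.sum_lt_sum
      · intro m hm
        obtain ⟨hkm, hmM⟩ := Finset.mem_Icc.mp hm
        have hsplit : M - k = (m - k) + (M - m) := by omega
        rw [hsplit, pow_add, pow_add]
        have hpow : a ^ (M - m) ≤ b ^ (M - m) := pow_le_pow_left₀ ha.le hab.le _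
        have hnn : 0 ≤ (m.choose k : ℝ) * (b ^ (m-k) * a ^ (m-k)) := by positivity
        calc (m.choose k : ℝ) * b ^ (m-k) * (a ^ (m-k) * a ^ (M-m))
            = ((m.choose k : ℝ) * (b ^ (m-k) * a ^ (m-k))) * a ^ (M-m) := by ring
          _ ≤ ((m.choose k : ℝ) * (b ^ (m-k) * a ^ (m-k))) * b ^ (M-m) :=
              mul_le_mul_of_nonneg_left hpow hnn
          _ = (m.choose k : ℝ) * a ^ (m-k) * (b ^ (m-k) * b ^ (M-m)) := by ring
      · refine ⟨k, Finset.mem_Icc.mpr ⟨le_refl k, hk.le⟩, ?_⟩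
        simp only [Nat.choose_self, Nat.cast_one, one_mul, Nat.sub_self, pow_zero]
        exact pow_lt_pow_left₀ hab ha.le (by omega : M - k ≠ 0)
    linarith [heq, hlt]
  refine ⟨t, ⟨ht, hft⟩, ?_⟩
  rintro y ⟨hy, hfy⟩
  rcases lt_trichotomy y t with h | h | h
  · exact absurd (key y t hy.1 h hfy hft) (fun x => x)
  · exact h
  · exact absurd (key t y ht.1 h hft hfy) (fun x => x)
end
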